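/- Let k₀, ℓ₀, m₀ be nonnegative integers whose sum is even and which form a balanced triple, i.e. k₀ ≤ ℓ₀ + m₀, ℓ₀ ≤ k₀ + m₀ and m₀ ≤ k₀ + ℓ₀; set k₀' = (−k₀+ℓ₀+m₀)/2, ℓ₀' = (k₀−ℓ₀+m₀)/2, m₀' = (k₀+ℓ₀−m₀)/2 (nonnegative integers). In the polynomial ring ℚ[x₁,y₁,x₂,y₂,x₃,y₃], let SL₂(ℚ) act by ring automorphisms, an element γ acting by simultaneously substituting each row vector (xᵢ, yᵢ) by (xᵢ, yᵢ)·γ for i = 1, 2, 3, and set P := (x₂y₃ − y₂x₃)^{k₀'} · (x₃y₁ − y₃x₁)^{ℓ₀'} · (x₁y₂ − y₁x₂)^{m₀'}. Then a polynomial Q ∈ ℚ[x₁,y₁,x₂,y₂,x₃,y₃] that is tri-homogeneous of tridegree (k₀, ℓ₀, m₀) — meaning every monomial of Q has total degree k₀ in the variables (x₁,y₁), total degree ℓ₀ in (x₂,y₂), and total degree m₀ in (x₃,y₃) — is invariant under this SL₂(ℚ)-action if and only if Q is a scalar multiple of P. In particular, the ℚ-vector space of SL₂(ℚ)-invariant tri-homogeneous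 polynomials of tridegree (k₀, ℓ₀, m₀) is one-dimensional, spanned by P. -/

import Mathlib

/-!
Write `u ∧ v = u₀v₁ - u₁v₀` (`wedge u v`), so that
`P(u, v, w) = (v ∧ w)^{k₀'} (w ∧ u)^{ℓ₀'} (u ∧ v)^{m₀'}`. A polynomial is determined by its
values on the triples with `u ∧ v ≠ 0` and `w ∧ u ≠ 0`.
For such a triple, the matrix with rows `u / (u ∧ v)` and `v` lies in `SL₂(ℚ)` and maps
`((u ∧ v) e₁, e₂, w')` to `(u, v, w)`, so by invariance and tri-homogeneity `Q(u, v, w)` is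
`(u ∧ v)^{k₀}` times `r(w') = Q(e₁, e₂, w')`. Applied to `(t e₁, t⁻¹ e₂, (t², 1))` the same
reduction gives `r(t², 1) = t^{2k₀'} r(1, 1)`. Over `ℚ` only squares are reached this way, but
`x ↦ r(x, 1)` is a polynomial, so `r(x, 1) = x^{k₀'} r(1, 1)` for all `x`; homogeneity in the
third vector then gives `r(x, y) = x^{k₀'} y^{ℓ₀'} r(1, 1)`, and `Q = ± r(1, 1) • P`.
-/

open MvPolynomial

/-- The substitution attached to `γ ∈ M₂(ℚ)`: acting on `ℚ[x₁,y₁,x₂,y₂,x₃,y₃]`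
(variables indexed `0,…,5` as `x₁,y₁,x₂,y₂,x₃,y₃`) by replacing each row vector
`(xᵢ, yᵢ)` by `(xᵢ, yᵢ)·γ`. -/
noncomputable def sl2Subst (γ : Matrix (Fin 2) (Fin 2) ℚ) : Fin 6 → MvPolynomial (Fin 6) ℚ :=
  ![C (γ 0 0) * X 0 + C (γ 1 0) * X 1,
    C (γ 0 1) * X 0 + C (γ 1 1) * X 1,
    C (γ 0 0) * X 2 + C (γ 1 0) * X 3,
    C (γ 0 1) * X 2 + C (γ 1 1) * X 3,
    C (γ 0 0) * X 4 + C (γ 1 0) * X 5,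
    C (γ 0 1) * X 4 + C (γ 1 1) * X 5]

/-- `Q` is tri-homogeneous of tridegree `(k₀, ℓ₀, m₀)`: every monomial of `Q` has total
degree `k₀` in `(x₁,y₁)`, `ℓ₀` in `(x₂,y₂)` and `m₀` in `(x₃,y₃)`. -/
def TriHomogeneous (k₀ l₀ m₀ : ℕ) (Q : MvPolynomial (Fin 6) ℚ) : Prop :=
  ∀ d ∈ Q.support, d 0 + d 1 = k₀ ∧ d 2 + d 3 = l₀ ∧ d 4 + d 5 = m₀

/-- The Clebsch–Gordan invariant
`P = (x₂y₃ − y₂x₃)^{k₀'} (x₃y₁ − y₃x₁)^{ℓ₀'} (x₁y₂ − y₁x₂)^{m₀'}`. -/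
noncomputable def clebschGordan (k₀' l₀' m₀' : ℕ) : MvPolynomial (Fin 6) ℚ :=
  (X 2 * X 5 - X 3 * X 4) ^ k₀' * (X 4 * X 1 - X 5 * X 0) ^ l₀' *
    (X 0 * X 3 - X 1 * X 2) ^ m₀'

open Matrix
open scoped MatrixGroups Polynomial

lemma MvPolynomial.eq_of_eval_eq_of_eval_ne_zero {R σ : Type*} [CommRing R] [IsDomain R]
    [Infinite R] {p q f : MvPolynomial σ R} (hf : f ≠ 0)
    (h : ∀ x, eval x f ≠ 0 → eval x p = eval x q) : p = q := by
  have hfpq : f * (p - q) = 0 := MvPolynomial.funext fun x => by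
    by_cases hx : eval x f = 0
    · simp [hx]
    · simp [h x hx]
  exact sub_eq_zero.mp ((mul_eq_zero.mp hfpq).resolve_left hf)

lemma Polynomial.eq_C_mul_X_pow_of_eval_sq {R : Type*} [CommRing R] [IsDomain R] [CharZero R]
    {f : R[X]} {c : R} {n : ℕ} (h : ∀ t : R, t ≠ 0 → f.eval (t ^ 2) = t ^ (2 * n) * c) :
    f = Polynomial.C c * Polynomial.X ^ n := by
  refine Polynomial.eq_of_infinite_eval_eq _ _ (Set.infinite_of_injective_forall_mem
    (f := fun k : ℕ => (((k + 1) ^ 2 : ℕ) : R))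
    (Nat.cast_injective.comp ((Nat.pow_left_injective two_ne_zero).comp (add_left_injective 1)))
    fun k => ?_)
  have hk : ((k + 1 : ℕ) : R) ≠ 0 := Nat.cast_ne_zero.mpr k.succ_ne_zero
  simp only [Set.mem_ofPred_eq, Nat.cast_pow, h _ hk, Polynomial.eval_mul, Polynomial.eval_C,
    Polynomial.eval_pow, Polynomial.eval_X]
  ring

namespace ClebschGordan

def triWeight : Fin 6 → ℕ × ℕ × ℕ :=
  ![(1, 0, 0), (1, 0, 0), (0, 1, 0), (0, 1, 0), (0, 0, 1), (0, 0, 1)]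

lemma weight_triWeight (d : Fin 6 →₀ ℕ) :
    Finsupp.weight triWeight d = (d 0 + d 1, d 2 + d 3, d 4 + d 5) := by
  rw [Finsupp.weight_apply, Finsupp.sum_fintype _ _ (by simp), Fin.sum_univ_six]
  simp [triWeight]

lemma triHomogeneous_iff_isWeightedHomogeneous {k l m : ℕ} {Q : MvPolynomial (Fin 6) ℚ} :
    TriHomogeneous k l m Q ↔ IsWeightedHomogeneous triWeight Q (k, l, m) := by
  simp only [TriHomogeneous, IsWeightedHomogeneous, mem_support_iff, weight_triWeight,
    Prod.mk.injEq]

lemma triHomogeneous_clebschGordan (a b c : ℕ) :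
    TriHomogeneous (b + c) (a + c) (a + b) (clebschGordan a b c) := by
  have hX (i j : Fin 6) := (isWeightedHomogeneous_X ℚ triWeight i).mul
    (isWeightedHomogeneous_X ℚ triWeight j)
  have h := ((((hX 2 5).sub (hX 3 4)).pow a).mul (((hX 4 1).sub (hX 5 0)).pow b)).mul
    (((hX 0 3).sub (hX 1 2)).pow c)
  have hdeg : ((b + c, a + c, a + b) : ℕ × ℕ × ℕ) = a • (triWeight 2 + triWeight 5) +
      b • (triWeight 4 + triWeight 1) + c • (triWeight 0 + triWeight 3) := by
    simp [triWeight]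
  rw [triHomogeneous_iff_isWeightedHomogeneous, hdeg]
  exact h

def wedge (u v : Fin 2 → ℚ) : ℚ := u 0 * v 1 - u 1 * v 0

lemma wedge_vecMul (u v : Fin 2 → ℚ) (g : Matrix (Fin 2) (Fin 2) ℚ) :
    wedge (u ᵥ* g) (v ᵥ* g) = g.det * wedge u v := by
  simp only [wedge, vecMul, dotProduct, Fin.sum_univ_two, det_fin_two]
  ring

def pt (u v w : Fin 2 → ℚ) : Fin 6 → ℚ := ![u 0, u 1, v 0, v 1, w 0, w 1]

lemma exists_pt_eq (x : Fin 6 → ℚ) : ∃ u v w, pt u v w = x :=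
  ⟨![x 0, x 1], ![x 2, x 3], ![x 4, x 5], by ext i; fin_cases i <;> rfl⟩

lemma eval_pt_clebschGordan (a b c : ℕ) (u v w : Fin 2 → ℚ) :
    eval (pt u v w) (clebschGordan a b c) = wedge v w ^ a * wedge w u ^ b * wedge u v ^ c := by
  simp [clebschGordan, pt, wedge]

lemma eval_pt_sl2Subst (g : Matrix (Fin 2) (Fin 2) ℚ) (u v w : Fin 2 → ℚ)
    (Q : MvPolynomial (Fin 6) ℚ) :
    eval (pt u v w) (aeval (sl2Subst g) Q) = eval (pt (u ᵥ* g) (v ᵥ* g) (w ᵥ* g)) Q := by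
  change aeval (pt u v w) (aeval (sl2Subst g) Q) = aeval _ Q
  rw [comp_aeval_apply]
  congr 2 with i
  fin_cases i <;> simp [sl2Subst, pt, vecMul, dotProduct, Fin.sum_univ_two] <;> ring

lemma eval_pt_smul {k l m : ℕ} {Q : MvPolynomial (Fin 6) ℚ} (hQ : TriHomogeneous k l m Q)
    (a b c : ℚ) (u v w : Fin 2 → ℚ) :
    eval (pt (a • u) (b • v) (c • w)) Q = a ^ k * b ^ l * c ^ m * eval (pt u v w) Q := by
  rw [eval_eq', eval_eq', Finset.mul_sum]
  refine Finset.sum_congr rfl fun d hd => ?_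
  obtain ⟨rfl, rfl, rfl⟩ := hQ d hd
  simp only [Fin.prod_univ_six, pt, Pi.smul_apply, smul_eq_mul, cons_val_zero, cons_val_one,
    cons_val]
  ring

lemma polynomial_eval_aeval_pt (x : ℚ) (Q : MvPolynomial (Fin 6) ℚ) :
    (aeval (![1, 0, 0, 1, Polynomial.X, 1] : Fin 6 → ℚ[X]) Q).eval x =
      eval (pt ![1, 0] ![0, 1] ![x, 1]) Q := by
  change Polynomial.aeval x _ = aeval _ Q
  rw [comp_aeval_apply]
  congr 2 with i
  fin_cases i <;> simp [pt]

lemma eq_of_eval_pt_eq {p q : MvPolynomial (Fin 6) ℚ}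
    (h : ∀ u v w, eval (pt u v w) p = eval (pt u v w) q) : p = q :=
  MvPolynomial.funext fun x => by
    obtain ⟨u, v, w, rfl⟩ := exists_pt_eq x
    exact h u v w

lemma eq_of_eval_pt_eq_of_wedge_ne_zero {p q : MvPolynomial (Fin 6) ℚ}
    (h : ∀ u v w, wedge u v ≠ 0 → wedge w u ≠ 0 → eval (pt u v w) p = eval (pt u v w) q) :
    p = q := by
  refine MvPolynomial.eq_of_eval_eq_of_eval_ne_zero (f := clebschGordan 0 1 1) ?_ fun x hx => ?_
  · intro h0
    simpa [eval_pt_clebschGordan, wedge] using congrArg (eval (pt ![1, 0] ![0, 1] ![1, 1])) h0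
  · obtain ⟨u, v, w, rfl⟩ := exists_pt_eq x
    rw [eval_pt_clebschGordan, pow_zero, pow_one, pow_one, one_mul] at hx
    exact h u v w (right_ne_zero_of_mul hx) (left_ne_zero_of_mul hx)

def IsInvariant (Q : MvPolynomial (Fin 6) ℚ) : Prop :=
  ∀ γ : SL(2, ℚ), aeval (sl2Subst γ) Q = Q

lemma isInvariant_clebschGordan (a b c : ℕ) : IsInvariant (clebschGordan a b c) := fun γ =>
  eq_of_eval_pt_eq fun u v w => by
    simp only [eval_pt_sl2Subst, eval_pt_clebschGordan, wedge_vecMul, γ.2, one_mul]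

section Invariant

variable {a b c : ℕ} {Q : MvPolynomial (Fin 6) ℚ}

lemma IsInvariant.eval_pt_vecMul (hinv : IsInvariant Q) (γ : SL(2, ℚ)) (u v w : Fin 2 → ℚ) :
    eval (pt (u ᵥ* γ) (v ᵥ* γ) (w ᵥ* γ)) Q = eval (pt u v w) Q := by
  rw [← eval_pt_sl2Subst, hinv]

lemma eval_pt_eq_of_wedge_ne_zero (hQ : TriHomogeneous (b + c) (a + c) (a + b) Q)
    (hinv : IsInvariant Q) {u v w : Fin 2 → ℚ} (huv : wedge u v ≠ 0) :
    eval (pt u v w) Q = wedge u v ^ (b + c) *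
      eval (pt ![1, 0] ![0, 1] ![-wedge v w, -wedge w u / wedge u v]) Q := by
  set D := wedge u v with hD
  have hγ : det !![u 0 / D, u 1 / D; v 0, v 1] = 1 := by
    rw [det_fin_two_of]
    field_simp
    rfl
  have hpt : pt u v w = pt ((D • ![1, 0]) ᵥ* !![u 0 / D, u 1 / D; v 0, v 1])
      (((1 : ℚ) • ![0, 1]) ᵥ* !![u 0 / D, u 1 / D; v 0, v 1])
      (((1 : ℚ) • ![-wedge v w, -wedge w u / D]) ᵥ* !![u 0 / D, u 1 / D; v 0, v 1]) := by
    ext i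
    fin_cases i <;> simp [pt, wedge, vecMul, dotProduct, Fin.sum_univ_two] <;> field_simp <;>
      simp only [hD, wedge] <;> ring
  rw [hpt, hinv.eval_pt_vecMul ⟨_, hγ⟩, eval_pt_smul hQ]
  ring

lemma eval_pt_basis_sq (hQ : TriHomogeneous (b + c) (a + c) (a + b) Q) (hinv : IsInvariant Q)
    {t : ℚ} (ht : t ≠ 0) :
    eval (pt ![1, 0] ![0, 1] ![t ^ 2, 1]) Q =
      t ^ (2 * a) * eval (pt ![1, 0] ![0, 1] ![1, 1]) Q := by
  have hwedge : wedge (t • ![1, 0]) (t⁻¹ • ![0, 1]) = 1 := by simp [wedge, ht]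
  have h := eval_pt_eq_of_wedge_ne_zero hQ hinv (u := t • ![1, 0]) (v := t⁻¹ • ![0, 1])
    (w := (1 : ℚ) • ![t ^ 2, 1]) (hwedge ▸ one_ne_zero)
  have hw : ![-wedge (t⁻¹ • ![0, 1]) ((1 : ℚ) • ![t ^ 2, 1]),
      -wedge ((1 : ℚ) • ![t ^ 2, 1]) (t • ![1, 0]) / wedge (t • ![1, 0]) (t⁻¹ • ![0, 1])] =
      t • ![1, 1] := by
    ext i
    fin_cases i <;> simp [wedge, ht]
    field_simp
  have hscale := eval_pt_smul hQ 1 1 t ![1, 0] ![0, 1] ![1, 1]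
  rw [one_smul, one_smul] at hscale
  rw [hw, eval_pt_smul hQ, hscale] at h
  rw [hwedge] at h
  simp only [one_pow, one_mul, mul_one, inv_pow] at h
  field_simp at h
  refine mul_left_cancel₀ (pow_ne_zero (b + c) ht) ?_
  rw [h]
  ring

lemma eval_pt_basis (hQ : TriHomogeneous (b + c) (a + c) (a + b) Q) (hinv : IsInvariant Q)
    (x : ℚ) {y : ℚ} (hy : y ≠ 0) :
    eval (pt ![1, 0] ![0, 1] ![x, y]) Q = x ^ a * y ^ b * eval (pt ![1, 0] ![0, 1] ![1, 1]) Q := by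
  have hF := Polynomial.eq_C_mul_X_pow_of_eval_sq
    (f := aeval (![1, 0, 0, 1, Polynomial.X, 1] : Fin 6 → ℚ[X]) Q) fun t ht => by
      rw [polynomial_eval_aeval_pt, eval_pt_basis_sq hQ hinv ht]
  have hxy : ![x, y] = y • ![x / y, 1] := by
    ext i
    fin_cases i <;> simp
    field_simp
  have hscale := eval_pt_smul hQ 1 1 y ![1, 0] ![0, 1] ![x / y, 1]
  rw [one_smul, one_smul] at hscale
  rw [hxy, hscale, ← polynomial_eval_aeval_pt, hF]
  simp only [Polynomial.eval_mul, Polynomial.eval_C, Polynomial.eval_pow, Polynomial.eval_X,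
    one_pow, div_pow]
  field_simp
  ring

lemma eval_pt_eq_mul_eval_pt_clebschGordan (hQ : TriHomogeneous (b + c) (a + c) (a + b) Q)
    (hinv : IsInvariant Q) {u v w : Fin 2 → ℚ} (huv : wedge u v ≠ 0) (hwu : wedge w u ≠ 0) :
    eval (pt u v w) Q = (-1) ^ (a + b) * eval (pt ![1, 0] ![0, 1] ![1, 1]) Q *
      eval (pt u v w) (clebschGordan a b c) := by
  rw [eval_pt_eq_of_wedge_ne_zero hQ hinv huv,
    eval_pt_basis hQ hinv _ (div_ne_zero (neg_ne_zero.2 hwu) huv), eval_pt_clebschGordan, div_pow]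
  field_simp
  ring

end Invariant

end ClebschGordan

/-- Clebsch–Gordan: for a balanced triple `(k₀, ℓ₀, m₀)` with even sum, setting
`k₀' = (−k₀+ℓ₀+m₀)/2`, `ℓ₀' = (k₀−ℓ₀+m₀)/2`, `m₀' = (k₀+ℓ₀−m₀)/2`, the polynomial `P`
is tri-homogeneous of tridegree `(k₀, ℓ₀, m₀)`, and a tri-homogeneous polynomial `Q` of
that tridegree is invariant under the substitution action of `SL₂(ℚ)` if and only if it
is a scalar multiple of `P`; so the space of invariants is one-dimensional, spanned
by `P`. -/
theorem clebsch_gordan_invariant_iff (k₀ l₀ m₀ k₀' l₀' m₀' : ℕ)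
    (hk' : 2 * k₀' + k₀ = l₀ + m₀) (hl' : 2 * l₀' + l₀ = k₀ + m₀)
    (hm' : 2 * m₀' + m₀ = k₀ + l₀) :
    TriHomogeneous k₀ l₀ m₀ (clebschGordan k₀' l₀' m₀') ∧
    (∀ γ : Matrix.SpecialLinearGroup (Fin 2) ℚ,
        aeval (sl2Subst (γ : Matrix (Fin 2) (Fin 2) ℚ)) (clebschGordan k₀' l₀' m₀') =
          clebschGordan k₀' l₀' m₀') ∧
    ∀ Q : MvPolynomial (Fin 6) ℚ, TriHomogeneous k₀ l₀ m₀ Q →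
      ((∀ γ : Matrix.SpecialLinearGroup (Fin 2) ℚ,
          aeval (sl2Subst (γ : Matrix (Fin 2) (Fin 2) ℚ)) Q = Q) ↔
        ∃ c : ℚ, Q = c • clebschGordan k₀' l₀' m₀') := by
  open ClebschGordan in
  obtain ⟨rfl, rfl, rfl⟩ : k₀ = l₀' + m₀' ∧ l₀ = k₀' + m₀' ∧ m₀ = k₀' + l₀' := by omega
  refine ⟨triHomogeneous_clebschGordan _ _ _, isInvariant_clebschGordan _ _ _,
    fun Q hQ => ⟨fun hinv => ?_, ?_⟩⟩
  · exact ⟨_, eq_of_eval_pt_eq_of_wedge_ne_zero fun u v w huv hwu => by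
      rw [smul_eval]
      exact eval_pt_eq_mul_eval_pt_clebschGordan hQ hinv huv hwu⟩
  · rintro ⟨c, rfl⟩ γ
    rw [map_smul, isInvariant_clebschGordan _ _ _ γ]
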